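/- arXiv:2507.23197 — 6 statements merged into one kernel-verified Lean document; each statement's English description precedes it below -/
import Mathlib

section
/- For real numbers LB < 0 < UB and any x with LB ≤ x ≤ UB and x ≠ 0, there exists a unique pair (a, x̂) with a ∈ {0,1} satisfying the MILP constraints x̂ ≥ x, x̂ ≥ 0, x̂ ≤ UB·a, and x̂ ≤ x − LB·(1−a); moreover this unique solution satisfies x̂ = max(0, x). -/
/-- MILP encoding of ReLU: for `LB < 0 < UB` and `x ∈ [LB, UB]` with `x ≠ 0`,
there exists a unique pair `(a, x̂)` with `a ∈ {0,1}` satisfying the MILP constraints,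
and the unique solution has `x̂ = max 0 x`. -/
theorem milp_relu_unique (LB UB x : ℝ) (hLB : LB < 0) (hUB : 0 < UB)
    (hx₁ : LB ≤ x) (hx₂ : x ≤ UB) (hx : x ≠ 0) :
    (∃! p : ℝ × ℝ, (p.1 = 0 ∨ p.1 = 1) ∧ x ≤ p.2 ∧ 0 ≤ p.2 ∧
        p.2 ≤ UB * p.1 ∧ p.2 ≤ x - LB * (1 - p.1)) ∧
    (∀ p : ℝ × ℝ, ((p.1 = 0 ∨ p.1 = 1) ∧ x ≤ p.2 ∧ 0 ≤ p.2 ∧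
        p.2 ≤ UB * p.1 ∧ p.2 ≤ x - LB * (1 - p.1)) → p.2 = max 0 x) := by
  have key : ∀ p : ℝ × ℝ, ((p.1 = 0 ∨ p.1 = 1) ∧ x ≤ p.2 ∧ 0 ≤ p.2 ∧
      p.2 ≤ UB * p.1 ∧ p.2 ≤ x - LB * (1 - p.1)) →
      p = if x < 0 then (0, 0) else (1, x) := by
    rintro ⟨a, y⟩ ⟨ha, h1, h2, h3, h4⟩
    rcases ha with ha | ha <;> subst ha <;> simp only at *
    · have hy : y = 0 := le_antisymm (by linarith) h2
      have hxneg : x < 0 := lt_of_le_of_ne (by linarith) hx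
      simp [hxneg, hy]
    · have hy : y = x := le_antisymm (by linarith) h1
      have : ¬ x < 0 := by linarith
      simp [this, hy]
  constructor
  · refine ⟨if x < 0 then (0, 0) else (1, x), ?_, fun p hp => key p hp⟩
    by_cases hxneg : x < 0 <;> simp [hxneg]
    · refine ⟨le_of_lt hxneg, ?_⟩; nlinarith
    · exact ⟨le_of_not_gt hxneg, hx₂⟩
  · intro p hp
    have h := key p hp
    by_cases hxneg : x < 0 <;> simp [hxneg] at h <;> subst h <;> simp
    · exact le_of_lt hxneg
    · exact le_of_not_gt hxneg
end

section
/- For real numbers LB < 0 < UB and any x with LB ≤ x ≤ UB, if (a, x̂) with a ∈ {0,1} satisfies x̂ ≥ x, x̂ ≥ 0, x̂ ≤ UB·a, x̂ ≤ x − LB·(1−a), then x̂ = max(0, x); and if additionally x < 0 then a = 0, while if x > 0 then a = 1. -/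
/-- If `(a, x̂)` with binary `a` satisfies the MILP ReLU constraints for
`LB < 0 < UB` and `x ∈ [LB, UB]`, then `x̂ = max 0 x`; moreover `x < 0 → a = 0`
and `x > 0 → a = 1`. -/
theorem milp_relu_sound (LB UB x a xhat : ℝ) (hLB : LB < 0) (hUB : 0 < UB)
    (hx₁ : LB ≤ x) (hx₂ : x ≤ UB) (ha : a = 0 ∨ a = 1)
    (h₁ : x ≤ xhat) (h₂ : 0 ≤ xhat) (h₃ : xhat ≤ UB * a)
    (h₄ : xhat ≤ x - LB * (1 - a)) :
    xhat = max 0 x ∧ (x < 0 → a = 0) ∧ (0 < x → a = 1) := by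
  rcases ha with rfl | rfl
  · have h0 : xhat = 0 := le_antisymm (by linarith [h₃]) h₂
    have hx0 : x ≤ 0 := by linarith
    exact ⟨by simp [h0, max_eq_left hx0], fun _ => rfl, fun hx => by linarith⟩
  · have hx : xhat = x := le_antisymm (by linarith [h₄]) h₁
    have hx0 : 0 ≤ x := hx ▸ h₂
    exact ⟨by simp [hx, max_eq_right hx0], fun h => by linarith, fun _ => rfl⟩
end

section
/- For real numbers LB < 0 < UB and x ∈ [LB, UB], a real number x̂ satisfies the LP relaxation constraints (there exists a ∈ [0,1] with x̂ ≥ x, x̂ ≥ 0, x̂ ≤ UB·a, x̂ ≤ x − LB·(1−a)) if and only if max(0, x) ≤ x̂ ≤ UB·(x − LB)/(UB − LB). -/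
/-- Proposition 1: the LP relaxation of the MILP ReLU encoding is equivalent to
the triangle abstraction. -/
theorem lp_relax_iff_triangle (LB UB x xhat : ℝ) (hLB : LB < 0) (hUB : 0 < UB)
    (hx₁ : LB ≤ x) (hx₂ : x ≤ UB) :
    (∃ a : ℝ, a ∈ Set.Icc (0 : ℝ) 1 ∧ x ≤ xhat ∧ 0 ≤ xhat ∧
        xhat ≤ UB * a ∧ xhat ≤ x - LB * (1 - a)) ↔
    (max 0 x ≤ xhat ∧ xhat ≤ UB * (x - LB) / (UB - LB)) := by
  have hden : (0:ℝ) < UB - LB := by linarith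
  constructor
  · rintro ⟨a, ⟨ha0, ha1⟩, hxle, h0le, hub, hlb⟩
    refine ⟨max_le h0le hxle, ?_⟩
    rw [le_div_iff₀ hden]
    nlinarith [mul_le_mul_of_nonneg_left hub (by linarith : (0:ℝ) ≤ -LB),
      mul_le_mul_of_nonneg_left hlb (le_of_lt hUB)]
  · rintro ⟨hmax, hupper⟩
    refine ⟨(x - LB) / (UB - LB), ⟨?_, ?_⟩, le_trans (le_max_right _ _) hmax,
      le_trans (le_max_left _ _) hmax, ?_, ?_⟩
    · apply div_nonneg <;> linarith
    · rw [div_le_one hden]; linarith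
    · rw [← mul_div_assoc]; exact hupper
    · have : x - LB * (1 - (x - LB) / (UB - LB)) = UB * (x - LB) / (UB - LB) := by
        field_simp; ring
      rw [this]; exact hupper
end

section
/- (Proposition 2, single-path case) Consider the chain network z = d·ReLU(b), b = c·ReLU(a) + β, with bounds LB(a) < 0 < UB(a) and LB(b) < 0 < UB(b), all values within bounds. Let sol be a feasible point of the triangle LP relaxation maximizing z. Define Δ(â) = ReLU(sol(a)) − sol(â), Δ(b) = c·Δ(â), and Δ(b̂) by: r(b)·Δ(b) if d > 0; max(Δ(b), −sol(b)) if d < 0 and sol(b) ≥ 0; max(0, Δ(b) + sol(b)) if d < 0 and sol(b) < 0, where r(b) = UB(b)/(UB(b) − LB(b)). Then the point sol' defined by sol'(a) = sol(a), sol'(â) = ReLU(sol(a)), sol'(b) = sol(b) + Δ(b), sol'(b̂) = sol(b̂) + Δ(b̂), sol'(z) = sol(z) + d·Δ(b̂) is feasible for the relaxation in which the ReLU at a is exact and the ReLU at b uses the triangle relaxation. -/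
private lemma triangle_ub (LBb UBb x : ℝ) (hLBb : LBb < 0) (hUBb : 0 < UBb)
    (hx : x ∈ Set.Icc LBb UBb) : max 0 x ≤ UBb / (UBb - LBb) * (x - LBb) := by
  obtain ⟨h1, h2⟩ := hx
  have hden : 0 < UBb - LBb := by linarith
  rw [max_le_iff]
  constructor
  · exact mul_nonneg (by positivity) (by linarith)
  · rw [div_mul_eq_mul_div, le_div_iff₀ hden]
    nlinarith

/-- Proposition 2 (single-path case): the corrected point `sol'` is feasible for
the relaxation where the ReLU at `a` is exact and the ReLU at `b` uses the
triangle relaxation. -/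
theorem sas_corrected_point_feasible
    (LBa UBa LBb UBb c β d : ℝ)
    (sola solahat solb solbhat solz Δahat Δb Δbhat : ℝ)
    (hLBa : LBa < 0) (hUBa : 0 < UBa) (hLBb : LBb < 0) (hUBb : 0 < UBb)
    (ha : sola ∈ Set.Icc LBa UBa) (hb : solb ∈ Set.Icc LBb UBb)
    -- sol is feasible for the fully relaxed LP:
    (hta₁ : max 0 sola ≤ solahat)
    (hta₂ : solahat ≤ UBa * (sola - LBa) / (UBa - LBa))
    (htb₁ : max 0 solb ≤ solbhat)
    (htb₂ : solbhat ≤ UBb / (UBb - LBb) * (solb - LBb))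
    (haffb : solb = c * solahat + β) (haffz : solz = d * solbhat)
    -- sol maximizes z, hence sol(b̂) lies on the appropriate extreme face:
    (hd : d ≠ 0)
    (hopt₁ : 0 < d → solbhat = UBb / (UBb - LBb) * (solb - LBb))
    (hopt₂ : d < 0 → solbhat = max 0 solb)
    -- the SAS corrections:
    (hΔahat : Δahat = max 0 sola - solahat)
    (hΔb : Δb = c * Δahat)
    (hΔbhat₁ : 0 < d → Δbhat = UBb / (UBb - LBb) * Δb)
    (hΔbhat₂ : d < 0 → 0 ≤ solb → Δbhat = max Δb (-solb))
    (hΔbhat₃ : d < 0 → solb < 0 → Δbhat = max 0 (Δb + solb))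
    -- all values within bounds: the perturbed pre-activation stays in [LB(b), UB(b)]:
    (hb' : solb + Δb ∈ Set.Icc LBb UBb) :
    -- feasibility of sol' for the relaxation with exact ReLU at a:
    max 0 sola = max 0 sola ∧                            -- sol'(â) = ReLU(sol'(a))
    max 0 (solb + Δb) ≤ solbhat + Δbhat ∧                 -- triangle lower bound at b
    solbhat + Δbhat ≤ UBb / (UBb - LBb) * (solb + Δb - LBb) ∧ -- triangle upper bound at b
    solb + Δb = c * max 0 sola + β ∧                      -- affine relation for b
    solz + d * Δbhat = d * (solbhat + Δbhat) := by        -- affine relation for z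
  have htri := triangle_ub LBb UBb (solb + Δb) hLBb hUBb hb'
  have key : max 0 (solb + Δb) ≤ solbhat + Δbhat ∧
      solbhat + Δbhat ≤ UBb / (UBb - LBb) * (solb + Δb - LBb) := by
    rcases hd.lt_or_gt with hneg | hpos
    · have hbh := hopt₂ hneg
      rcases le_or_gt 0 solb with hs | hs
      · have hΔ := hΔbhat₂ hneg hs
        have heq : solbhat + Δbhat = max 0 (solb + Δb) := by
          rw [hbh, hΔ]
          rcases le_total Δb (-solb) with h | h
          · rw [max_eq_right h, max_eq_right hs, max_eq_left (by linarith)]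
            ring
          · rw [max_eq_left h, max_eq_right hs, max_eq_right (by linarith)]
        rw [heq]; exact ⟨le_refl _, htri⟩
      · have hΔ := hΔbhat₃ hneg hs
        have heq : solbhat + Δbhat = max 0 (solb + Δb) := by
          rw [hbh, hΔ, max_eq_left hs.le]
          rcases le_total 0 (Δb + solb) with h | h
          · rw [max_eq_right h, max_eq_right (by linarith)]; ring
          · rw [max_eq_left h, max_eq_left (by linarith)]; ring
        rw [heq]; exact ⟨le_refl _, htri⟩
    · have hbh := hopt₁ hpos
      have hΔ := hΔbhat₁ hpos
      have heq : solbhat + Δbhat = UBb / (UBb - LBb) * (solb + Δb - LBb) := by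
        rw [hbh, hΔ]; ring
      rw [heq]; exact ⟨htri, le_refl _⟩
  refine ⟨rfl, key.1, key.2, ?_, ?_⟩
  · rw [hΔb, hΔahat, haffb]; ring
  · rw [haffz]; ring
end

section
/- (Proposition 2, conclusion) Under the single-path setting above, Utility_max^z(a) := −d·Δ(b̂) satisfies 0 ≤ Improve_max^z(a) ≤ Utility_max^z(a), where Improve_max^z(a) = sol(z) − Sol_max_{a}^z(z) is the decrease of the computed maximum of z when the ReLU at a is encoded exactly instead of relaxed. -/
private lemma relu_le_relax {LB UB x : ℝ} (hLB : LB < 0) (hUB : 0 < UB)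
    (hx : x ∈ Set.Icc LB UB) : max 0 x ≤ UB / (UB - LB) * (x - LB) := by
  have hden : 0 < UB - LB := by linarith
  rw [max_le_iff]
  constructor
  · have h1 : 0 ≤ UB / (UB - LB) := by positivity
    have h2 : 0 ≤ x - LB := by linarith [hx.1]
    exact mul_nonneg h1 h2
  · rw [div_mul_eq_mul_div, le_div_iff₀ hden]
    nlinarith [hx.2]

/-- Proposition 2 (conclusion, single-path case):
`0 ≤ Improve_max^z(a) ≤ Utility_max^z(a)` where
`Improve_max^z(a) = sol(z) − Sol_max_{a}^z(z)` and `Utility_max^z(a) = −d·Δ(b̂)`. -/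
theorem sas_utility_overapproximates_improve
    (LBa UBa LBb UBb c β d : ℝ)
    (sola solahat solb solbhat solz Δahat Δb Δbhat M : ℝ)
    (hLBa : LBa < 0) (hUBa : 0 < UBa) (hLBb : LBb < 0) (hUBb : 0 < UBb)
    (ha : sola ∈ Set.Icc LBa UBa) (hb : solb ∈ Set.Icc LBb UBb)
    -- sol is feasible for the fully relaxed LP:
    (hta₁ : max 0 sola ≤ solahat)
    (hta₂ : solahat ≤ UBa * (sola - LBa) / (UBa - LBa))
    (htb₁ : max 0 solb ≤ solbhat)
    (htb₂ : solbhat ≤ UBb / (UBb - LBb) * (solb - LBb))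
    (haffb : solb = c * solahat + β) (haffz : solz = d * solbhat)
    -- sol maximizes z over the fully relaxed LP:
    (hsolmax : IsGreatest
      ((fun p : ℝ × ℝ × ℝ × ℝ × ℝ => p.2.2.2.2) ''
        {p : ℝ × ℝ × ℝ × ℝ × ℝ |
          p.1 ∈ Set.Icc LBa UBa ∧ p.2.2.1 ∈ Set.Icc LBb UBb ∧
          max 0 p.1 ≤ p.2.1 ∧ p.2.1 ≤ UBa * (p.1 - LBa) / (UBa - LBa) ∧
          max 0 p.2.2.1 ≤ p.2.2.2.1 ∧
          p.2.2.2.1 ≤ UBb / (UBb - LBb) * (p.2.2.1 - LBb) ∧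
          p.2.2.1 = c * p.2.1 + β ∧ p.2.2.2.2 = d * p.2.2.2.1})
      solz)
    -- hence sol(b̂) lies on the appropriate extreme face:
    (hd : d ≠ 0)
    (hopt₁ : 0 < d → solbhat = UBb / (UBb - LBb) * (solb - LBb))
    (hopt₂ : d < 0 → solbhat = max 0 solb)
    -- the SAS corrections:
    (hΔahat : Δahat = max 0 sola - solahat)
    (hΔb : Δb = c * Δahat)
    (hΔbhat₁ : 0 < d → Δbhat = UBb / (UBb - LBb) * Δb)
    (hΔbhat₂ : d < 0 → 0 ≤ solb → Δbhat = max Δb (-solb))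
    (hΔbhat₃ : d < 0 → solb < 0 → Δbhat = max 0 (Δb + solb))
    -- all values within bounds:
    (hb' : solb + Δb ∈ Set.Icc LBb UBb)
    -- M = Sol_max_{a}^z(z): maximum of z with the ReLU at a exact:
    (hM : IsGreatest
      ((fun p : ℝ × ℝ × ℝ × ℝ × ℝ => p.2.2.2.2) ''
        {p : ℝ × ℝ × ℝ × ℝ × ℝ |
          p.1 ∈ Set.Icc LBa UBa ∧ p.2.2.1 ∈ Set.Icc LBb UBb ∧
          p.2.1 = max 0 p.1 ∧
          max 0 p.2.2.1 ≤ p.2.2.2.1 ∧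
          p.2.2.2.1 ≤ UBb / (UBb - LBb) * (p.2.2.1 - LBb) ∧
          p.2.2.1 = c * p.2.1 + β ∧ p.2.2.2.2 = d * p.2.2.2.1})
      M) :
    0 ≤ solz - M ∧ solz - M ≤ -(d * Δbhat) := by
  obtain ⟨hMmem, hMub⟩ := hM
  obtain ⟨_, hsolub⟩ := hsolmax
  have hMle : M ≤ solz := by
    obtain ⟨p, hp, hpz⟩ := hMmem
    refine hsolub ⟨p, ⟨hp.1, hp.2.1, le_of_eq hp.2.2.1.symm, ?_, hp.2.2.2.1,
      hp.2.2.2.2.1, hp.2.2.2.2.2⟩, hpz⟩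
    have h := relu_le_relax hLBa hUBa hp.1
    rw [div_mul_eq_mul_div] at h
    rwa [hp.2.2.1]
  -- construct the corrected feasible point for the exact encoding
  have key : d * (solbhat + Δbhat) ≤ M := by
    have hbh' : solbhat + Δbhat = UBb / (UBb - LBb) * ((solb + Δb) - LBb)
        ∨ solbhat + Δbhat = max 0 (solb + Δb) := by
      rcases lt_or_gt_of_ne hd with hdneg | hdpos
      · right
        rw [hopt₂ hdneg]
        rcases le_or_gt 0 solb with hs | hs
        · rw [hΔbhat₂ hdneg hs, max_eq_right hs]
          rcases le_total Δb (-solb) with h | h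
          · rw [max_eq_right h, max_eq_left (by linarith)]; ring
          · rw [max_eq_left h, max_eq_right (by linarith)]
        · rw [hΔbhat₃ hdneg hs, max_eq_left hs.le]
          rcases le_total 0 (Δb + solb) with h | h
          · rw [max_eq_right h, max_eq_right (by linarith)]; ring
          · rw [max_eq_left h, max_eq_left (by linarith)]; ring
      · left
        rw [hopt₁ hdpos, hΔbhat₁ hdpos]; ring
    have hlow : max 0 (solb + Δb) ≤ solbhat + Δbhat := by
      rcases hbh' with h | h
      · rw [h]; exact relu_le_relax hLBb hUBb hb'
      · rw [h]
    have hhigh : solbhat + Δbhat ≤ UBb / (UBb - LBb) * ((solb + Δb) - LBb) := by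
      rcases hbh' with h | h
      · rw [h]
      · rw [h]; exact relu_le_relax hLBb hUBb hb'
    have haff' : solb + Δb = c * (max 0 sola) + β := by
      rw [haffb, hΔb, hΔahat]; ring
    exact hMub ⟨(sola, max 0 sola, solb + Δb, solbhat + Δbhat,
      d * (solbhat + Δbhat)), ⟨ha, hb', rfl, hlow, hhigh, haff', rfl⟩, rfl⟩
  constructor
  · linarith
  · have : d * solbhat + d * Δbhat ≤ M := by linarith [key, mul_add d solbhat Δbhat]
    rw [haffz]; linarith
end

section
/- For LB < 0 < UB and the triangle relaxation T = {(x, x̂) : LB ≤ x ≤ UB, max(0,x) ≤ x̂ ≤ UB·(x − LB)/(UB − LB)}, T is a convex set, and it equals the convex hull of the graph of ReLU restricted to [LB, UB], i.e., the convex hull of {(x, max(0,x)) : x ∈ [LB, UB]}. -/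
/-- The triangle relaxation region is convex and equals the convex hull of the
graph of ReLU restricted to `[LB, UB]`. -/
theorem triangle_relaxation_convexHull (LB UB : ℝ) (hLB : LB < 0) (hUB : 0 < UB) :
    Convex ℝ {p : ℝ × ℝ | p.1 ∈ Set.Icc LB UB ∧
      max 0 p.1 ≤ p.2 ∧ p.2 ≤ UB * (p.1 - LB) / (UB - LB)} ∧
    {p : ℝ × ℝ | p.1 ∈ Set.Icc LB UB ∧
      max 0 p.1 ≤ p.2 ∧ p.2 ≤ UB * (p.1 - LB) / (UB - LB)} =
      convexHull ℝ {p : ℝ × ℝ | p.1 ∈ Set.Icc LB UB ∧ p.2 = max 0 p.1} := by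
  have hd : (0:ℝ) < UB - LB := by linarith
  have hnLB : (0:ℝ) < -LB := by linarith
  set S := {p : ℝ × ℝ | p.1 ∈ Set.Icc LB UB ∧ p.2 = max 0 p.1} with hS
  set T := {p : ℝ × ℝ | p.1 ∈ Set.Icc LB UB ∧
      max 0 p.1 ≤ p.2 ∧ p.2 ≤ UB * (p.1 - LB) / (UB - LB)} with hT
  have hconv : Convex ℝ T := by
    intro p hp q hq a b ha hb hab
    obtain ⟨⟨hp1, hp2⟩, hp3, hp4⟩ := hp
    obtain ⟨⟨hq1, hq2⟩, hq3, hq4⟩ := hq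
    have hp0 : (0:ℝ) ≤ p.2 := le_trans (le_max_left _ _) hp3
    have hq0 : (0:ℝ) ≤ q.2 := le_trans (le_max_left _ _) hq3
    have hpx : p.1 ≤ p.2 := le_trans (le_max_right _ _) hp3
    have hqx : q.1 ≤ q.2 := le_trans (le_max_right _ _) hq3
    have hp4' : p.2 * (UB - LB) ≤ UB * (p.1 - LB) := (le_div_iff₀ hd).mp hp4
    have hq4' : q.2 * (UB - LB) ≤ UB * (q.1 - LB) := (le_div_iff₀ hd).mp hq4
    have h1 : (a • p + b • q).1 = a * p.1 + b * q.1 := rfl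
    have h2 : (a • p + b • q).2 = a * p.2 + b * q.2 := rfl
    refine ⟨⟨?_, ?_⟩, ?_, ?_⟩
    · rw [h1]; nlinarith
    · rw [h1]; nlinarith
    · rw [h1, h2, max_le_iff]
      constructor
      · nlinarith
      · nlinarith
    · rw [h1, h2, le_div_iff₀ hd]
      calc (a * p.2 + b * q.2) * (UB - LB)
          = a * (p.2 * (UB - LB)) + b * (q.2 * (UB - LB)) := by ring
        _ ≤ a * (UB * (p.1 - LB)) + b * (UB * (q.1 - LB)) :=
            add_le_add (mul_le_mul_of_nonneg_left hp4' ha)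
              (mul_le_mul_of_nonneg_left hq4' hb)
        _ = UB * (a * p.1 + b * q.1 - (a + b) * LB) := by ring
        _ = UB * (a * p.1 + b * q.1 - LB) := by rw [hab, one_mul]
  refine ⟨hconv, Set.Subset.antisymm ?_ ?_⟩
  · -- T ⊆ convexHull S
    have hA : ((LB, 0) : ℝ × ℝ) ∈ S :=
      ⟨⟨le_refl _, le_of_lt (lt_trans hLB hUB)⟩, by simp [max_eq_left hLB.le]⟩
    have hO : ((0, 0) : ℝ × ℝ) ∈ S := ⟨⟨hLB.le, hUB.le⟩, by simp⟩
    have hB : ((UB, UB) : ℝ × ℝ) ∈ S :=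
      ⟨⟨le_of_lt (lt_trans hLB hUB), le_refl _⟩, by simp [max_eq_right hUB.le]⟩
    intro p hp
    obtain ⟨⟨hp1, hp2⟩, hp3, hp4⟩ := hp
    have hp0 : (0:ℝ) ≤ p.2 := le_trans (le_max_left _ _) hp3
    have hpx : p.1 ≤ p.2 := le_trans (le_max_right _ _) hp3
    have hp4' : p.2 * (UB - LB) ≤ UB * (p.1 - LB) := (le_div_iff₀ hd).mp hp4
    set a : ℝ := (p.2 - p.1) / (-LB) with haa
    set c : ℝ := p.2 / UB with hcc
    have ha : 0 ≤ a := div_nonneg (by linarith) hnLB.le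
    have hc : 0 ≤ c := div_nonneg hp0 hUB.le
    have hac : a + c ≤ 1 := by
      rw [haa, hcc, div_add_div _ _ (ne_of_gt hnLB) (ne_of_gt hUB),
        div_le_one (by positivity)]
      nlinarith
    have key := (convex_convexHull ℝ S).sum_mem (t := Finset.univ)
      (w := ![a, 1 - a - c, c]) (z := ![(LB, 0), (0, 0), (UB, UB)])
      ?_ ?_ ?_
    · convert key using 1
      rw [Fin.sum_univ_three]
      simp only [Matrix.cons_val_zero, Matrix.cons_val_one, Matrix.head_cons,
        Matrix.cons_val_two, Matrix.tail_cons]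
      ext
      · simp only [Prod.fst_add, Prod.smul_fst, smul_eq_mul]
        rw [haa, hcc]
        field_simp [hLB.ne]
        ring
      · simp only [Prod.snd_add, Prod.smul_snd, smul_eq_mul]
        rw [haa, hcc]
        field_simp
        ring
    · intro i _
      fin_cases i <;> simp [ha, hc] <;> linarith
    · rw [Fin.sum_univ_three]; simp; ring
    · intro i _
      fin_cases i
      · exact subset_convexHull ℝ S hA
      · exact subset_convexHull ℝ S hO
      · exact subset_convexHull ℝ S hB
  · -- convexHull S ⊆ T
    apply convexHull_min ?_ hconv
    rintro p ⟨⟨hp1, hp2⟩, hp3⟩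
    refine ⟨⟨hp1, hp2⟩, le_of_eq hp3.symm, ?_⟩
    rw [hp3, le_div_iff₀ hd]
    rcases le_or_gt p.1 0 with h | h
    · rw [max_eq_left h]; nlinarith
    · rw [max_eq_right h.le]; nlinarith
end
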